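/- arXiv:math/0511616 — 2 statements merged into one kernel-verified Lean document; each statement's English description precedes it below -/
import Mathlib

section
/- Let G be a group acting on a type α and let ⫶ be a ternary relation on subsets of α satisfying invariance and monotonicity. Define A ⫶*_C B iff for every B̂ ⊇ B there exists A' ≡_{B∪C} A with A' ⫶_C B̂. Then ⫶* satisfies invariance and monotonicity; moreover, if ⫶ additionally satisfies base monotonicity then so does ⫶*, if ⫶ additionally satisfies transitivity then so does ⫶*, and if ⫶ additionally satisfies normality then so does ⫶*. -/
open scoped Pointwise

/-- The relation `⫶*` derived from `⫶`: `A ⫶*_C B` iff for every `B̂ ⊇ B`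
there is `A' ≡_{B∪C} A` with `A' ⫶_C B̂`. -/
def indStar {α : Type*} (G : Type*) [Group G] [MulAction G α]
    (ind : Set α → Set α → Set α → Prop) (A C B : Set α) : Prop :=
  ∀ Bhat : Set α, B ⊆ Bhat →
    ∃ (A' : Set α) (g : G), (∀ x ∈ B ∪ C, g • x = x) ∧ g • A = A' ∧ ind A' C Bhat

-- `ind A C B` stands for `A ⫶_C B`: the base is the middle argument.

section Axioms

variable {α : Type*} (G : Type*) [Group G] [MulAction G α]
  (ind : Set α → Set α → Set α → Prop)

def IndInvariant : Prop :=
  ∀ (g : G) (A B C : Set α), ind A C B → ind (g • A) (g • C) (g • B)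

def IndMonotone : Prop :=
  ∀ A B C A' B' : Set α, ind A C B → A' ⊆ A → B' ⊆ B → ind A' C B'

def IndBaseMonotone : Prop :=
  ∀ A B C D : Set α, D ⊆ C → C ⊆ B → ind A D B → ind A C B

def IndTransitive : Prop :=
  ∀ A B C D : Set α, D ⊆ C → C ⊆ B → ind B C A → ind C D A → ind B D A

def IndNormal : Prop :=
  ∀ A B C : Set α, ind A C B → ind (A ∪ C) C B

end Axioms

theorem Set.smul_set_eq_self_of_forall_smul_eq {α G : Type*} [Group G] [MulAction G α]
    {g : G} {S : Set α} (h : ∀ x ∈ S, g • x = x) : g • S = S :=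
  (Set.image_congr h).trans (Set.image_id S)

section IndStar

variable {α G : Type*} [Group G] [MulAction G α] {ind : Set α → Set α → Set α → Prop}

theorem IndInvariant.indStar (hinv : IndInvariant G ind) : IndInvariant G (indStar G ind) := by
  intro g A B C h Bhat hBhat
  obtain ⟨_, k, hk, rfl, hind⟩ :=
    h (g⁻¹ • Bhat) (Set.smul_set_subset_iff_subset_inv_smul_set.mp hBhat)
  refine ⟨g • k • A, g * k * g⁻¹, ?_, by simp only [mul_smul, inv_smul_smul], ?_⟩
  · rintro _ (⟨x, hx, rfl⟩ | ⟨x, hx, rfl⟩)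
    · simp only [mul_smul, inv_smul_smul, hk x (Or.inl hx)]
    · simp only [mul_smul, inv_smul_smul, hk x (Or.inr hx)]
  · simpa only [smul_inv_smul] using hinv g _ _ _ hind

theorem IndMonotone.indStar (hmono : IndMonotone ind) : IndMonotone (indStar G ind) := by
  intro A B C A' B' h hA' hB' Bhat hBhat
  -- `Bhat` need not contain `B`, so ask for a conjugate of `A` over `Bhat ∪ B` instead
  obtain ⟨_, g, hg, rfl, hind⟩ := h (Bhat ∪ B) Set.subset_union_right
  exact ⟨g • A', g, fun x hx => hg x (Set.union_subset_union_left C hB' hx), rfl,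
    hmono _ _ C _ Bhat hind (Set.smul_set_mono hA') Set.subset_union_left⟩

theorem IndBaseMonotone.indStar (hbase : IndBaseMonotone ind) :
    IndBaseMonotone (indStar G ind) := by
  intro A B C D hDC hCB h Bhat hBhat
  obtain ⟨A', g, hg, hgA, hind⟩ := h Bhat hBhat
  exact ⟨A', g, fun x hx => hg x (Or.inl (Set.union_subset le_rfl hCB hx)), hgA,
    hbase A' Bhat C D hDC (hCB.trans hBhat) hind⟩

theorem IndNormal.indStar (hnorm : IndNormal ind) : IndNormal (indStar G ind) := by
  intro A B C h Bhat hBhat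
  obtain ⟨A', g, hg, rfl, hind⟩ := h Bhat hBhat
  refine ⟨g • A ∪ C, g, hg, ?_, hnorm _ Bhat C hind⟩
  rw [Set.smul_set_union, Set.smul_set_eq_self_of_forall_smul_eq fun x hx => hg x (Or.inr hx)]

/-- Given `Â ⊇ A`, first move `C` to `g • C ⫶_D Â` over `A ∪ D`; by invariance of `⫶*` the
same `g` gives `g • B ⫶*_{g • C} A`, which yields `k • g • B ⫶_{g • C} Â` with `k` fixing
`A ∪ g • C`, and transitivity of `⫶` concludes. -/
theorem IndTransitive.indStar (hinv : IndInvariant G ind) (htrans : IndTransitive ind) :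
    IndTransitive (indStar G ind) := by
  intro A B C D hDC hCB hBC hCD Ahat hAhat
  obtain ⟨_, g, hg, rfl, hindC⟩ := hCD Ahat hAhat
  have hgA : g • A = A := Set.smul_set_eq_self_of_forall_smul_eq fun x hx => hg x (Or.inl hx)
  have hDgC : D ⊆ g • C := fun x hx => ⟨x, hDC hx, hg x (Or.inr hx)⟩
  have hBC' : _root_.indStar G ind (g • B) (g • C) A := hgA ▸ hinv.indStar g B A C hBC
  obtain ⟨_, k, hk, rfl, hindB⟩ := hBC' Ahat hAhat
  have hgCB : g • C ⊆ k • g • B := by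
    intro x hx
    rw [← hk x (Or.inr hx)]
    exact Set.smul_mem_smul_set (Set.smul_set_mono hCB hx)
  refine ⟨k • g • B, k * g, ?_, mul_smul k g B, htrans Ahat _ (g • C) D hDgC hgCB hindB hindC⟩
  rintro x (hx | hx)
  · rw [mul_smul, hg x (Or.inl hx), hk x (Or.inl hx)]
  · rw [mul_smul, hg x (Or.inr hx), hk x (Or.inr (hDgC hx))]

end IndStar

/-- Lemma on derived forking: if `⫶` satisfies invariance and monotonicity then
`⫶*` satisfies invariance and monotonicity; moreover base monotonicity, transitivity and
normality are each inherited by `⫶*` from `⫶`. -/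
theorem stmt_2 {α G : Type*} [Group G] [MulAction G α]
    (ind : Set α → Set α → Set α → Prop)
    (inv : ∀ (g : G) (A B C : Set α), ind A C B → ind (g • A) (g • C) (g • B))
    (mono : ∀ A B C A' B' : Set α, ind A C B → A' ⊆ A → B' ⊆ B → ind A' C B') :
    ((∀ (g : G) (A B C : Set α),
        indStar G ind A C B → indStar G ind (g • A) (g • C) (g • B)) ∧
     (∀ A B C A' B' : Set α,
        indStar G ind A C B → A' ⊆ A → B' ⊆ B → indStar G ind A' C B')) ∧
    ((∀ A B C D : Set α, D ⊆ C → C ⊆ B → ind A D B → ind A C B) →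
      ∀ A B C D : Set α, D ⊆ C → C ⊆ B → indStar G ind A D B → indStar G ind A C B) ∧
    ((∀ A B C D : Set α, D ⊆ C → C ⊆ B → ind B C A → ind C D A → ind B D A) →
      ∀ A B C D : Set α, D ⊆ C → C ⊆ B →
        indStar G ind B C A → indStar G ind C D A → indStar G ind B D A) ∧
    ((∀ A B C : Set α, ind A C B → ind (A ∪ C) C B) →
      ∀ A B C : Set α, indStar G ind A C B → indStar G ind (A ∪ C) C B) := by
  exact ⟨⟨IndInvariant.indStar inv, IndMonotone.indStar mono⟩, IndBaseMonotone.indStar,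
    IndTransitive.indStar inv, IndNormal.indStar⟩
end

section
/- Let L be a first-order language, M an L-structure, and Ω a set of inconsistency pairs for M. Then the Ω-dividing independence relation ⫶Ω satisfies invariance under L-automorphisms of M, monotonicity, base monotonicity, and strong finite character. Moreover, A ⫶Ω_B B and A ⫶Ω_A B hold for all sets A, B ⊆ M. -/
open FirstOrder

universe u

/-- `b'` realizes `tp(b/C)` in `M`: `b` and `b'` satisfy the same formulas
with parameters from `C`. -/
def RealizesTp (L : FirstOrder.Language.{u, u}) {M : Type u} [L.Structure M]
    {m : ℕ} (C : Set M) (b b' : Fin m → M) : Prop :=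
  ∀ (t : ℕ) (θ : L.Formula (Fin m ⊕ Fin t)) (c : Fin t → M), (∀ i, c i ∈ C) →
    (θ.Realize (Sum.elim b c) ↔ θ.Realize (Sum.elim b' c))

/-- `ψ(ȳ₀,…,ȳ_{k−1})` is a `k`-inconsistency witness for `φ(x̄;ȳ)` with respect to `M`. -/
def IsIncWitness {L : FirstOrder.Language.{u, u}} (M : Type u) [L.Structure M]
    {n m k : ℕ} (φ : L.Formula (Fin n ⊕ Fin m)) (ψ : L.Formula (Fin k × Fin m)) : Prop :=
  ¬ ∃ (a : Fin n → M) (b : Fin k → Fin m → M),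
      (∀ i : Fin k, φ.Realize (Sum.elim a (b i))) ∧ ψ.Realize (fun p => b p.1 p.2)

/-- `φ(x̄;b̄)` `(φ,ψ)`-divides over `C`: there is a sequence of tuples, each realizing
`tp(b̄/C)`, on which `ψ` holds along every strictly increasing selection of `k` indices. -/
def PhiPsiDivides {L : FirstOrder.Language.{u, u}} {M : Type u} [L.Structure M]
    {n m k : ℕ} (φ : L.Formula (Fin n ⊕ Fin m)) (ψ : L.Formula (Fin k × Fin m))
    (b : Fin m → M) (C : Set M) : Prop :=
  ∃ bs : ℕ → Fin m → M, (∀ i, RealizesTp L C b (bs i)) ∧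
    ∀ f : Fin k → ℕ, StrictMono f → ψ.Realize (fun p => bs (f p.1) p.2)

/-- The data of a candidate inconsistency pair `(φ, ψ)`. -/
structure IncPairData (L : FirstOrder.Language.{u, u}) where
  n : ℕ
  m : ℕ
  k : ℕ
  φ : L.Formula (Fin n ⊕ Fin m)
  ψ : L.Formula (Fin k × Fin m)

/-- Ω-dividing independence: `A ⫶Ω_C B` iff no finite tuple from `A` satisfies, over a
tuple from `B∪C`, a formula that `(φ,ψ)`-divides over `C` for some `(φ,ψ) ∈ Ω`. -/
def IndOmega {L : FirstOrder.Language.{u, u}} {M : Type u} [L.Structure M]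
    (Ω : Set (IncPairData L)) (A C B : Set M) : Prop :=
  ¬ ∃ p ∈ Ω, ∃ (a : Fin p.n → M) (b : Fin p.m → M),
      (∀ i, a i ∈ A) ∧ (∀ i, b i ∈ B ∪ C) ∧
      p.φ.Realize (Sum.elim a b) ∧ PhiPsiDivides p.φ p.ψ b C

/-!
Invariance and the monotonicity properties are formal consequences of the definition, and
strong finite character comes from splitting the parameter tuple of a witnessing formula into
its entries in `B` and those in `C`. For `A ⫶Ω_B B` and `A ⫶Ω_A B`, a `(φ,ψ)`-dividing sequence
`(bᵢ)` over `C` for a realized `φ(a; b)` would satisfy `φ(a; bᵢ)` for all `i`, contradicting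
that `ψ` is an inconsistency witness: when `b` lies in `C` its type over `C` pins down `bᵢ = b`,
and when `a` lies in `C` the formula `φ(a; y)` belongs to `tp(b/C)`.
-/

open FirstOrder.Language

variable {L : FirstOrder.Language.{u, u}} {M N : Type u} [L.Structure M] [L.Structure N]

section RealizesTp

variable {m : ℕ} {C : Set M} {b b' : Fin m → M}

theorem RealizesTp.mono {D : Set M} (h : RealizesTp L C b b') (hDC : D ⊆ C) :
    RealizesTp L D b b' :=
  fun t θ c hc => h t θ c fun i => hDC (hc i)

theorem RealizesTp.map (g : M ≃[L] N) (h : RealizesTp L C b b') :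
    RealizesTp L (g '' C) (g ∘ b) (g ∘ b') := by
  intro t θ c hc
  have hc' : ∀ i, g.symm (c i) ∈ C := fun i => by
    obtain ⟨x, hx, hgx⟩ := hc i
    rwa [← hgx, g.symm_apply_apply]
  have hpull : ∀ d : Fin m → M, Sum.elim (g ∘ d) c = g ∘ Sum.elim d (g.symm ∘ c) := by
    intro d; funext x; cases x <;> simp
  rw [hpull, hpull, StrongHomClass.realize_formula, StrongHomClass.realize_formula]
  exact h t θ _ hc'

theorem RealizesTp.eq_of_forall_mem (h : RealizesTp L C b b') (hb : ∀ i, b i ∈ C) :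
    b' = b := by
  funext i
  have hi := h 1 ((Term.var (Sum.inl i)).equal (Term.var (Sum.inr 0))) (fun _ => b i)
    (fun _ => hb i)
  simp only [Formula.realize_equal, Term.realize_var, Sum.elim_inl, Sum.elim_inr] at hi
  exact hi.mp trivial

theorem RealizesTp.realize_iff {n : ℕ} (h : RealizesTp L C b b')
    (φ : L.Formula (Fin n ⊕ Fin m)) {a : Fin n → M} (ha : ∀ i, a i ∈ C) :
    φ.Realize (Sum.elim a b) ↔ φ.Realize (Sum.elim a b') := by
  have hswap : ∀ d : Fin m → M, Sum.elim d a ∘ Sum.swap = Sum.elim a d := by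
    intro d; funext x; cases x <;> rfl
  have hθ := h n (φ.relabel Sum.swap) a ha
  rwa [Formula.realize_relabel, Formula.realize_relabel, hswap, hswap] at hθ

end RealizesTp

section PhiPsiDivides

variable {n m k : ℕ} {φ : L.Formula (Fin n ⊕ Fin m)} {ψ : L.Formula (Fin k × Fin m)}
  {b : Fin m → M} {C : Set M}

theorem PhiPsiDivides.mono_base {D : Set M} (h : PhiPsiDivides φ ψ b C) (hDC : D ⊆ C) :
    PhiPsiDivides φ ψ b D := by
  obtain ⟨bs, hbs, hψ⟩ := h
  exact ⟨bs, fun j => (hbs j).mono hDC, hψ⟩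

theorem PhiPsiDivides.map (g : M ≃[L] N) (h : PhiPsiDivides φ ψ b C) :
    PhiPsiDivides φ ψ (g ∘ b) (g '' C) := by
  obtain ⟨bs, hbs, hψ⟩ := h
  refine ⟨fun j => g ∘ bs j, fun j => (hbs j).map g, fun f hf => ?_⟩
  exact (StrongHomClass.realize_formula g ψ).2 (hψ f hf)

theorem IsIncWitness.false_of_phiPsiDivides_of_forall_realize (hw : IsIncWitness M φ ψ)
    {a : Fin n → M} (hd : PhiPsiDivides φ ψ b C)
    (hφ : ∀ b', RealizesTp L C b b' → φ.Realize (Sum.elim a b')) : False := by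
  obtain ⟨bs, hbs, hψ⟩ := hd
  exact hw ⟨a, fun i => bs i, fun i => hφ _ (hbs i), hψ _ Fin.val_strictMono⟩

theorem IsIncWitness.not_phiPsiDivides_of_forall_mem_right (hw : IsIncWitness M φ ψ)
    {a : Fin n → M} (hφ : φ.Realize (Sum.elim a b)) (hb : ∀ i, b i ∈ C) :
    ¬ PhiPsiDivides φ ψ b C := fun hd =>
  hw.false_of_phiPsiDivides_of_forall_realize hd fun _ h => h.eq_of_forall_mem hb ▸ hφ

theorem IsIncWitness.not_phiPsiDivides_of_forall_mem_left (hw : IsIncWitness M φ ψ)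
    {a : Fin n → M} (hφ : φ.Realize (Sum.elim a b)) (ha : ∀ i, a i ∈ C) :
    ¬ PhiPsiDivides φ ψ b C := fun hd =>
  hw.false_of_phiPsiDivides_of_forall_realize hd fun _ h => (h.realize_iff φ ha).1 hφ

end PhiPsiDivides

theorem exists_sum_elim_comp_eq_of_mem_union {α : Type*} {m : ℕ} {B C : Set α}
    {b : Fin m → α} (hb : ∀ i, b i ∈ B ∪ C) :
    ∃ (m₁ m₂ : ℕ) (b₁ : Fin m₁ → α) (b₂ : Fin m₂ → α) (ρ : Fin m → Fin m₁ ⊕ Fin m₂),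
      (∀ j, b₁ j ∈ B) ∧ (∀ j, b₂ j ∈ C) ∧ Sum.elim b₁ b₂ ∘ ρ = b := by
  classical
  let e₁ := Fintype.equivFin {i // b i ∈ B}
  let e₂ := Fintype.equivFin {i // b i ∉ B}
  refine ⟨_, _, fun j => b (e₁.symm j), fun j => b (e₂.symm j),
    (Equiv.sumCompl fun i => b i ∈ B).symm.trans (e₁.sumCongr e₂),
    fun j => (e₁.symm j).2, fun j => (hb _).resolve_left (e₂.symm j).2, ?_⟩
  funext i
  by_cases hi : b i ∈ B
  · simp [Equiv.sumCompl_symm_apply_of_pos (p := fun i => b i ∈ B) hi]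
  · simp [Equiv.sumCompl_symm_apply_of_neg (p := fun i => b i ∈ B) hi]

section IndOmega

variable {Ω : Set (IncPairData L)}

theorem IndOmega.mono {A B C A' B' : Set M} (h : IndOmega Ω A C B) (hA : A' ⊆ A)
    (hB : B' ⊆ B) : IndOmega Ω A' C B' := by
  rintro ⟨p, hp, a, b, ha, hb, hφ, hd⟩
  exact h ⟨p, hp, a, b, fun i => hA (ha i), fun i => (hb i).imp_left (@hB _), hφ, hd⟩

theorem IndOmega.mono_base {A B C D : Set M} (hDC : D ⊆ C) (hCB : C ⊆ B)
    (h : IndOmega Ω A D B) : IndOmega Ω A C B := by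
  rintro ⟨p, hp, a, b, ha, hb, hφ, hd⟩
  exact h ⟨p, hp, a, b, ha, fun i => Or.inl ((hb i).elim id (@hCB _)), hφ, hd.mono_base hDC⟩

theorem not_indOmega_image {A B C : Set M} (g : M ≃[L] N) (h : ¬ IndOmega Ω A C B) :
    ¬ IndOmega Ω (g '' A) (g '' C) (g '' B) := by
  rw [IndOmega, not_not] at h ⊢
  obtain ⟨p, hp, a, b, ha, hb, hφ, hd⟩ := h
  refine ⟨p, hp, g ∘ a, g ∘ b, fun i => Set.mem_image_of_mem g (ha i),
    fun i => (hb i).imp (Set.mem_image_of_mem g) (Set.mem_image_of_mem g), ?_, hd.map g⟩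
  rwa [← Sum.comp_elim, StrongHomClass.realize_formula]

theorem IndOmega.image {A B C : Set M} (g : M ≃[L] N) (h : IndOmega Ω A C B) :
    IndOmega Ω (g '' A) (g '' C) (g '' B) := by
  have hgg : ∀ S : Set M, g.symm '' (g '' S) = S := fun S => by
    simp [Set.image_image, g.symm_apply_apply]
  by_contra hg
  have hpull := not_indOmega_image g.symm hg
  rw [hgg, hgg, hgg] at hpull
  exact hpull h

theorem exists_formula_not_indOmega_of_not_indOmega {A B C : Set M}
    (h : ¬ IndOmega Ω A C B) :
    ∃ (n m k : ℕ) (a : Fin n → M) (b : Fin m → M) (cc : Fin k → M)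
      (φ : L.Formula (Fin n ⊕ Fin m ⊕ Fin k)),
      (∀ i, a i ∈ A) ∧ (∀ i, b i ∈ B) ∧ (∀ i, cc i ∈ C) ∧
      φ.Realize (Sum.elim a (Sum.elim b cc)) ∧
      ∀ a' : Fin n → M, φ.Realize (Sum.elim a' (Sum.elim b cc)) →
        ¬ IndOmega Ω (Set.range a') C (Set.range b) := by
  rw [IndOmega, not_not] at h
  obtain ⟨p, hp, a, b, ha, hb, hφ, hd⟩ := h
  obtain ⟨m₁, m₂, b₁, b₂, ρ, hb₁, hb₂, hρ⟩ := exists_sum_elim_comp_eq_of_mem_union hb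
  have hrelabel : ∀ a' : Fin p.n → M, (p.φ.relabel (Sum.map id ρ)).Realize
      (Sum.elim a' (Sum.elim b₁ b₂)) ↔ p.φ.Realize (Sum.elim a' b) := fun a' => by
    rw [Formula.realize_relabel, Sum.elim_comp_map, Function.comp_id, hρ]
  refine ⟨p.n, m₁, m₂, a, b₁, b₂, p.φ.relabel (Sum.map id ρ), ha, hb₁,
    hb₂, (hrelabel a).2 hφ, fun a' ha' hind => ?_⟩
  refine hind ⟨p, hp, a', b, Set.mem_range_self, fun i => ?_, (hrelabel a').1 ha', hd⟩
  rw [← hρ, Function.comp_apply]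
  cases ρ i with
  | inl j => exact Or.inl (Set.mem_range_self j)
  | inr j => exact Or.inr (hb₂ j)

theorem indOmega_self_base (hΩ : ∀ p ∈ Ω, IsIncWitness M p.φ p.ψ) (A B : Set M) :
    IndOmega Ω A B B := by
  rintro ⟨p, hp, a, b, -, hb, hφ, hd⟩
  exact IsIncWitness.not_phiPsiDivides_of_forall_mem_right (hΩ p hp) hφ
    (fun i => (hb i).elim id id) hd

theorem indOmega_base_self (hΩ : ∀ p ∈ Ω, IsIncWitness M p.φ p.ψ) (A B : Set M) :
    IndOmega Ω A A B := by
  rintro ⟨p, hp, a, b, ha, -, hφ, hd⟩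
  exact IsIncWitness.not_phiPsiDivides_of_forall_mem_left (hΩ p hp) hφ ha hd

end IndOmega

/-- basic properties of Ω-dividing: if `Ω` is a set of inconsistency pairs
for `M`, then `⫶Ω` satisfies invariance under `L`-automorphisms, monotonicity, base
monotonicity and strong finite character; moreover `A ⫶Ω_B B` and `A ⫶Ω_A B` always hold. -/
theorem stmt_11 {L : FirstOrder.Language.{u, u}} {M : Type u} [L.Structure M]
    (Ω : Set (IncPairData L)) (hΩ : ∀ p ∈ Ω, IsIncWitness M p.φ p.ψ) :
    (∀ (g : M ≃[L] M) (A B C : Set M),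
        IndOmega Ω A C B → IndOmega Ω (⇑g '' A) (⇑g '' C) (⇑g '' B)) ∧
    (∀ A B C A' B' : Set M, IndOmega Ω A C B → A' ⊆ A → B' ⊆ B → IndOmega Ω A' C B') ∧
    (∀ A B C D : Set M, D ⊆ C → C ⊆ B → IndOmega Ω A D B → IndOmega Ω A C B) ∧
    (∀ A B C : Set M, ¬ IndOmega Ω A C B →
      ∃ (n m k : ℕ) (a : Fin n → M) (b : Fin m → M) (cc : Fin k → M)
        (φ : L.Formula (Fin n ⊕ Fin m ⊕ Fin k)),
        (∀ i, a i ∈ A) ∧ (∀ i, b i ∈ B) ∧ (∀ i, cc i ∈ C) ∧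
        φ.Realize (Sum.elim a (Sum.elim b cc)) ∧
        ∀ a' : Fin n → M, φ.Realize (Sum.elim a' (Sum.elim b cc)) →
          ¬ IndOmega Ω (Set.range a') C (Set.range b)) ∧
    (∀ A B : Set M, IndOmega Ω A B B ∧ IndOmega Ω A A B) :=
  ⟨fun g _ _ _ => IndOmega.image g, fun _ _ _ _ _ => IndOmega.mono,
   fun _ _ _ _ => IndOmega.mono_base, fun _ _ _ => exists_formula_not_indOmega_of_not_indOmega,
   fun A B => ⟨indOmega_self_base hΩ A B, indOmega_base_self hΩ A B⟩⟩
end
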